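/- arXiv:1306.1493 — 3 statements merged into one kernel-verified Lean document; each statement's English description precedes it below -/
import Mathlib

section
/- Let l : ℝ^p → ℝ be continuous and nonnegative with l(θ̃) = 0, and suppose l(θ) → ∞ as ‖θ − θ̃‖ → ∞ along every ray from θ̃ (i.e., for each unit vector u, l(θ̃ + r u) → ∞ as r → ∞ and r ↦ l(θ̃ + ru) is continuous). Then h(θ) = θ̃ + (1 + l(θ)/(2n))(θ − θ̃) is a surjection from ℝ^p onto ℝ^p. -/
/-- if l is continuous, nonnegative, l(θ̃) = 0, and l tends
to infinity along every ray from θ̃, then the composite similarity mapping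
h(θ) = θ̃ + (1 + l(θ)/(2n))(θ − θ̃) is a surjection from ℝ^p onto ℝ^p. -/
theorem stmt4 {p : ℕ}
    (l : EuclideanSpace ℝ (Fin p) → ℝ) (θt : EuclideanSpace ℝ (Fin p))
    (hcont : Continuous l) (hl : ∀ θ, 0 ≤ l θ) (hlt : l θt = 0)
    (hray : ∀ u : EuclideanSpace ℝ (Fin p), ‖u‖ = 1 →
      Filter.Tendsto (fun r : ℝ => l (θt + r • u)) Filter.atTop Filter.atTop)
    (n : ℝ) (hn : 0 < n)
    (h : EuclideanSpace ℝ (Fin p) → EuclideanSpace ℝ (Fin p))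
    (hdef : ∀ θ, h θ = θt + (1 + l θ / (2 * n)) • (θ - θt)) :
    Function.Surjective h := by
  intro y
  by_cases hy : y = θt
  · refine ⟨θt, ?_⟩
    simp [hdef, hlt, hy]
  · set R : ℝ := ‖y - θt‖ with hR
    have hRpos : 0 < R := by
      simpa [hR] using sub_ne_zero.mpr hy
    set u : EuclideanSpace ℝ (Fin p) := R⁻¹ • (y - θt) with hu
    have hRu : R • u = y - θt := by
      rw [hu, smul_smul, mul_inv_cancel₀ hRpos.ne', one_smul]
    set f : ℝ → ℝ := fun r => r * (1 + l (θt + r • u) / (2 * n)) with hf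
    have hfc : Continuous f := by
      exact continuous_id.mul (continuous_const.add
        ((hcont.comp (continuous_const.add (continuous_id.smul continuous_const))).div_const _))
    have hf0 : f 0 = 0 := by simp [hf]
    have hfR : R ≤ f R := by
      have h1 : (1:ℝ) ≤ 1 + l (θt + R • u) / (2 * n) :=
        le_add_of_nonneg_right (div_nonneg (hl _) (by linarith))
      calc R = R * 1 := (mul_one R).symm
        _ ≤ f R := by exact mul_le_mul_of_nonneg_left h1 hRpos.le
    have : R ∈ Set.Icc (f 0) (f R) := ⟨by simp [hf0, hRpos.le], hfR⟩
    obtain ⟨r, hr, hrR⟩ := intermediate_value_Icc hRpos.le hfc.continuousOn this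
    refine ⟨θt + r • u, ?_⟩
    rw [hdef]
    have : (1 + l (θt + r • u) / (2 * n)) • (θt + r • u - θt) = (f r) • u := by
      simp [hf, smul_smul, mul_comm]
    have hrR' : r * (1 + l (θt + r • u) / (2 * n)) = R := hrR
    rw [add_sub_cancel_left, smul_smul, mul_comm, hrR', hRu]
    abel
end

section
/- Let l : ℝ^p → ℝ be continuous, nonnegative, with l(θ̃) = 0, and suppose that along every ray from θ̃ the function r ↦ r(1 + l(θ̃ + ru)/(2n)) is strictly increasing in r ≥ 0. Then h(θ) = θ̃ + (1 + l(θ)/(2n))(θ − θ̃) is injective on ℝ^p. -/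
/-- if along every ray from θ̃ the map
r ↦ r(1 + l(θ̃ + ru)/(2n)) is strictly increasing on r ≥ 0, then the
composite similarity mapping h is injective on ℝ^p. -/
theorem stmt5 {p : ℕ}
    (l : EuclideanSpace ℝ (Fin p) → ℝ) (θt : EuclideanSpace ℝ (Fin p))
    (hcont : Continuous l) (hl : ∀ θ, 0 ≤ l θ) (hlt : l θt = 0)
    (n : ℝ) (hn : 0 < n)
    (hmono : ∀ u : EuclideanSpace ℝ (Fin p), ‖u‖ = 1 →
      StrictMonoOn (fun r : ℝ => r * (1 + l (θt + r • u) / (2 * n)))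
        (Set.Ici (0 : ℝ)))
    (h : EuclideanSpace ℝ (Fin p) → EuclideanSpace ℝ (Fin p))
    (hdef : ∀ θ, h θ = θt + (1 + l θ / (2 * n)) • (θ - θt)) :
    Function.Injective h := by
  have hcpos : ∀ θ, 0 < 1 + l θ / (2 * n) := by
    intro θ
    have : 0 ≤ l θ / (2 * n) := div_nonneg (hl θ) (by linarith)
    linarith
  intro θ₁ θ₂ heq
  rw [hdef, hdef] at heq
  have key : (1 + l θ₁ / (2 * n)) • (θ₁ - θt) = (1 + l θ₂ / (2 * n)) • (θ₂ - θt) := by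
    have := heq
    exact add_left_cancel this
  set c₁ := 1 + l θ₁ / (2 * n) with hc₁
  set c₂ := 1 + l θ₂ / (2 * n) with hc₂
  have hc₁pos : 0 < c₁ := hcpos θ₁
  have hc₂pos : 0 < c₂ := hcpos θ₂
  by_cases h1 : θ₁ = θt
  · subst h1
    have : c₂ • (θ₂ - θ₁) = 0 := by
      rw [← key]; simp
    rcases smul_eq_zero.mp this with hc | hv
    · exact absurd hc (ne_of_gt hc₂pos)
    · have : θ₂ = θ₁ := by
        have := sub_eq_zero.mp hv; exact this
      exact this.symm
  · have hv₁ : θ₁ - θt ≠ 0 := sub_ne_zero.mpr h1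
    set v₁ := θ₁ - θt with hv₁def
    have hr₁pos : (0:ℝ) < ‖v₁‖ := norm_pos_iff.mpr hv₁
    set r₁ := ‖v₁‖ with hr₁def
    set u := r₁⁻¹ • v₁ with hudef
    have hu : ‖u‖ = 1 := by
      rw [hudef, norm_smul, norm_inv, norm_norm]
      field_simp
    have hθ₁ : θ₁ = θt + r₁ • u := by
      rw [hudef, smul_smul, mul_inv_cancel₀ (ne_of_gt hr₁pos), one_smul, hv₁def]
      abel
    -- θ₂ - θt = (c₁/c₂) • v₁
    have hv₂ : θ₂ - θt = (c₁ / c₂) • v₁ := by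
      have : c₂⁻¹ • (c₁ • v₁) = c₂⁻¹ • (c₂ • (θ₂ - θt)) := by rw [key]
      rw [smul_smul, smul_smul, inv_mul_cancel₀ (ne_of_gt hc₂pos), one_smul] at this
      rw [← this]
      congr 1
      rw [div_eq_inv_mul]
    set r₂ := (c₁ / c₂) * r₁ with hr₂def
    have hr₂pos : 0 < r₂ := mul_pos (div_pos hc₁pos hc₂pos) hr₁pos
    have hθ₂ : θ₂ = θt + r₂ • u := by
      have : r₂ • u = (c₁ / c₂) • v₁ := by
        rw [hudef, smul_smul, hr₂def, mul_assoc, mul_inv_cancel₀ (ne_of_gt hr₁pos), mul_one]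
      rw [this, ← hv₂]; abel
    have hinj := (hmono u hu).injOn
    have hfeq : r₁ * (1 + l (θt + r₁ • u) / (2 * n)) = r₂ * (1 + l (θt + r₂ • u) / (2 * n)) := by
      rw [← hθ₁, ← hθ₂, ← hc₁, ← hc₂, hr₂def]
      field_simp
    have : r₁ = r₂ := hinj (Set.mem_Ici.mpr (le_of_lt hr₁pos))
      (Set.mem_Ici.mpr (le_of_lt hr₂pos)) hfeq
    rw [hθ₁, hθ₂, this]
end

section
/- Let h(θ) = θ̃ + (1 + l(θ)/(2n))(θ − θ̃) on Θ ⊆ ℝ^p with l nonnegative and l(θ̃) = 0. If the level sets c(τ) = {θ : l(θ) = τ} are boundaries of nested connected regions containing θ̃ (i.e., l is a 'radially monotone' function: along each ray from θ̃, l is strictly increasing), then h is a bijection from Θ onto its image, and the images of distinct contours c(τ₁), c(τ₂) with τ₁ ≠ τ₂ are disjoint. -/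
/-- if l is nonnegative, vanishes at θ̃, and is strictly
increasing along every ray from θ̃ (nested contours, condition 4), then the
composite similarity mapping h is a bijection from Θ onto its image, and
images of distinct contours are disjoint. -/
theorem stmt19 {p : ℕ} (Θ : Set (EuclideanSpace ℝ (Fin p)))
    (l : EuclideanSpace ℝ (Fin p) → ℝ) (θt : EuclideanSpace ℝ (Fin p))
    (hθt : θt ∈ Θ) (hl : ∀ θ, 0 ≤ l θ) (hlt : l θt = 0)
    (n : ℝ) (hn : 0 < n)
    (hmono : ∀ u : EuclideanSpace ℝ (Fin p), ‖u‖ = 1 →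
      StrictMonoOn (fun r : ℝ => l (θt + r • u)) (Set.Ici (0 : ℝ)))
    (h : EuclideanSpace ℝ (Fin p) → EuclideanSpace ℝ (Fin p))
    (hdef : ∀ θ, h θ = θt + (1 + l θ / (2 * n)) • (θ - θt)) :
    Set.InjOn h Θ ∧
    ∀ τ₁ τ₂ : ℝ, τ₁ ≠ τ₂ →
      Disjoint (h '' {θ ∈ Θ | l θ = τ₁}) (h '' {θ ∈ Θ | l θ = τ₂}) := by
  have hc : ∀ θ, 0 < 1 + l θ / (2 * n) := by
    intro θ
    have h1 : 0 ≤ l θ / (2 * n) := div_nonneg (hl θ) (by linarith)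
    linarith
  -- f is strictly increasing along each ray
  have hf : ∀ u : EuclideanSpace ℝ (Fin p), ‖u‖ = 1 →
      StrictMonoOn (fun r : ℝ => r * (1 + l (θt + r • u) / (2 * n)))
        (Set.Ici (0 : ℝ)) := by
    intro u hu a ha b hb hab
    have hla : l (θt + a • u) < l (θt + b • u) := hmono u hu ha hb hab
    have hca := hc (θt + a • u)
    have hcb := hc (θt + b • u)
    have hdiv : l (θt + a • u) / (2 * n) < l (θt + b • u) / (2 * n) := by
      gcongr
    have hb' : (0:ℝ) < b := lt_of_le_of_lt ha hab
    calc a * (1 + l (θt + a • u) / (2 * n))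
        ≤ b * (1 + l (θt + a • u) / (2 * n)) :=
          mul_le_mul_of_nonneg_right hab.le hca.le
      _ < b * (1 + l (θt + b • u) / (2 * n)) := by nlinarith
  have key : Function.Injective h := by
    intro θ₁ θ₂ heq
    rw [hdef, hdef] at heq
    have hveq : (1 + l θ₁ / (2 * n)) • (θ₁ - θt)
        = (1 + l θ₂ / (2 * n)) • (θ₂ - θt) := add_left_cancel heq
    by_cases h0 : θ₁ - θt = 0
    · have h2 : (1 + l θ₂ / (2 * n)) • (θ₂ - θt) = 0 := by
        rw [← hveq, h0, smul_zero]
      have h3 : θ₂ - θt = 0 := by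
        rcases smul_eq_zero.mp h2 with hc' | hv
        · exact absurd hc' (ne_of_gt (hc θ₂))
        · exact hv
      rw [sub_eq_zero] at h0 h3
      rw [h0, h3]
    · set v := θ₁ - θt with hv
      set r₁ := ‖v‖ with hr₁
      have hr₁pos : 0 < r₁ := norm_pos_iff.mpr h0
      set u : EuclideanSpace ℝ (Fin p) := r₁⁻¹ • v with hu
      have hunorm : ‖u‖ = 1 := by
        rw [hu, norm_smul, norm_inv, norm_norm, inv_mul_cancel₀ (ne_of_gt hr₁pos)]
      have hθ₁ : θ₁ = θt + r₁ • u := by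
        rw [hu, smul_smul, mul_inv_cancel₀ (ne_of_gt hr₁pos), one_smul, hv]
        abel
      obtain ⟨c₁, hc₁⟩ : ∃ c, c = 1 + l θ₁ / (2 * n) := ⟨_, rfl⟩
      obtain ⟨c₂, hc₂⟩ : ∃ c, c = 1 + l θ₂ / (2 * n) := ⟨_, rfl⟩
      have hc₁pos : 0 < c₁ := hc₁ ▸ hc θ₁
      have hc₂pos : 0 < c₂ := hc₂ ▸ hc θ₂
      rw [← hc₁, ← hc₂] at hveq
      set r₂ := c₂⁻¹ * (c₁ * r₁) with hr₂
      have hθ₂ : θ₂ = θt + r₂ • u := by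
        have h4 : θ₂ - θt = c₂⁻¹ • (c₁ • v) := by
          rw [hveq, smul_smul, inv_mul_cancel₀ (ne_of_gt hc₂pos), one_smul]
        have h5 : θ₂ - θt = r₂ • u := by
          rw [h4, hr₂, hu, smul_smul, smul_smul]
          congr 1
          field_simp
        rw [← h5]
        abel
      have hr₂pos : 0 < r₂ := by positivity
      have hfeq : r₁ * (1 + l (θt + r₁ • u) / (2 * n))
          = r₂ * (1 + l (θt + r₂ • u) / (2 * n)) := by
        rw [← hθ₁, ← hθ₂, ← hc₁, ← hc₂, hr₂]
        field_simp
      have hrr : r₁ = r₂ :=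
        (hf u hunorm).injOn (le_of_lt hr₁pos) (le_of_lt hr₂pos) hfeq
      rw [hθ₁, hθ₂, hrr]
  constructor
  · exact fun a _ b _ hab => key hab
  · intro τ₁ τ₂ hne
    rw [Set.disjoint_left]
    rintro x ⟨θ₁, ⟨_, hl1⟩, rfl⟩ ⟨θ₂, ⟨_, hl2⟩, heq⟩
    have := key heq
    exact hne (by rw [← hl1, ← hl2, this])
end
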